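/- arXiv:2210.14302 — 2 statements merged into one kernel-verified Lean document; each statement's English description precedes it below -/
import Mathlib

section
/- The set of all possible compromises of the two-level example equals the union of two segments: N̂ = N₁ ∩ N₂ = H((6,6),(3,6)) ∪ H((3,6),(1,5)), where H(·,·) denotes the convex hull (segment) of two points. -/
/-- The feasible region of the numerical two-level example. -/
def S : Set (ℝ × ℝ) :=
  {x : ℝ × ℝ | -2 * x.1 + x.2 ≤ 3 ∧ -x.1 + 2 * x.2 ≤ 9 ∧ x.2 ≤ 6 ∧ x.1 ≤ 6 ∧
    -x.1 - 2 * x.2 ≤ -9 ∧ 3 * x.1 - 4 * x.2 ≤ 7 ∧ x.1 - 2 * x.2 ≤ 2 ∧ 0 ≤ x.1 ∧ 0 ≤ x.2}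

/-- The level-1 objective map. -/
noncomputable def F1 (x : ℝ × ℝ) : ℝ × ℝ × ℝ :=
  (2 * x.1 + 2 * x.2, -(1/2) * x.1 + (7/25) * x.2, -(1/5) * x.1 + (1/2) * x.2)

/-- The level-2 objective map. -/
noncomputable def F2 (x : ℝ × ℝ) : ℝ × ℝ × ℝ :=
  (x.1 + 3 * x.2, -2 * x.1 - x.2, x.2)

/-- The set of points of `S` which are non-dominated for level 1 on `S`. -/
def N1 : Set (ℝ × ℝ) :=
  {x ∈ S | ¬ ∃ y ∈ S, F1 x ≤ F1 y ∧ F1 y ≠ F1 x}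

/-- The set of points of `S` which are non-dominated for level 2 on `S`. -/
def N2 : Set (ℝ × ℝ) :=
  {x ∈ S | ¬ ∃ y ∈ S, F2 x ≤ F2 y ∧ F2 y ≠ F2 x}

/-!
Both objective maps are linear, so `y` dominates `x` exactly when `y - x` lies in a cone:
for level 1 the cone spanned by `(-1, 1)` and `(14, 25)`, for level 2 the one spanned by
`(-1, 2)` and `(-3, 1)`. The two upper edges of `S`, on the lines `x₂ = 6` and
`-x₁ + 2x₂ = 9`, have outward normals `(0, 1)` and `(-1, 2)`, which make a positive inner
product with every nonzero vector of both cones, so no point of `S` dominates a point of these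
edges at either level. Conversely, from any other point of `S` one can move up, towards the
corner `(3, 6)`, or along `(14, 25)` to a point of `S` that is strictly better for level 1. Hence `N₁` is the union of the two edges, and it
lies inside `N₂`.
-/

lemma mem_segment_iff_of_fst_lt {p q z : ℝ × ℝ} (h : p.1 < q.1) :
    z ∈ segment ℝ p q ↔
      z.1 ∈ Set.Icc p.1 q.1 ∧ (q.1 - p.1) * (z.2 - p.2) = (q.2 - p.2) * (z.1 - p.1) := by
  constructor
  · rintro ⟨a, b, ha, hb, hab, rfl⟩
    obtain rfl : a = 1 - b := by linarith
    simp only [Prod.fst_add, Prod.snd_add, Prod.smul_fst, Prod.smul_snd, smul_eq_mul,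
      Set.mem_Icc]
    refine ⟨⟨by nlinarith, by nlinarith⟩, by ring⟩
  · rintro ⟨⟨h₁, h₂⟩, hline⟩
    have hpq : 0 < q.1 - p.1 := sub_pos.2 h
    set t := (z.1 - p.1) / (q.1 - p.1) with ht
    refine ⟨1 - t, t, ?_, div_nonneg (by linarith) hpq.le, by ring, ?_⟩
    · rw [sub_nonneg, ht, div_le_one hpq]
      linarith
    · ext <;> simp only [Prod.fst_add, Prod.snd_add, Prod.smul_fst, Prod.smul_snd, smul_eq_mul, ht]
      · field_simp
        ring
      · field_simp
        linear_combination -hline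

def upperEdges : Set (ℝ × ℝ) :=
  {x ∈ S | x.2 = 6 ∨ -x.1 + 2 * x.2 = 9}

lemma segments_eq_upperEdges :
    convexHull ℝ {((6, 6) : ℝ × ℝ), ((3, 6) : ℝ × ℝ)} ∪
        convexHull ℝ {((3, 6) : ℝ × ℝ), ((1, 5) : ℝ × ℝ)} = upperEdges := by
  ext ⟨a, b⟩
  rw [convexHull_pair, convexHull_pair, segment_symm ℝ (6, 6), segment_symm ℝ (3, 6) (1, 5),
    Set.mem_union, mem_segment_iff_of_fst_lt (by norm_num),
    mem_segment_iff_of_fst_lt (by norm_num)]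
  simp only [upperEdges, S, Set.mem_ofPred_eq, Set.mem_Icc]
  constructor
  · rintro (⟨⟨h₁, h₂⟩, hline⟩ | ⟨⟨h₁, h₂⟩, hline⟩)
    · refine ⟨?_, Or.inl (by linarith)⟩
      and_intros <;> linarith
    · refine ⟨?_, Or.inr (by linarith)⟩
      and_intros <;> linarith
  · rintro ⟨⟨h₁, h₂, h₃, h₄, -, -, -, -, -⟩, hb | hline⟩
    · exact Or.inl ⟨⟨by linarith, h₄⟩, by rw [hb]; ring⟩
    · exact Or.inr ⟨⟨by linarith, by linarith⟩, by linarith⟩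

lemma not_exists_dominating_of_forall_le_imp_eq {α β : Type*} [LE β] {F : α → β} {T : Set α}
    {x : α} (h : ∀ y ∈ T, F x ≤ F y → y = x) : ¬ ∃ y ∈ T, F x ≤ F y ∧ F y ≠ F x :=
  fun ⟨y, hy, hle, hne⟩ => hne (by rw [h y hy hle])

lemma eq_of_mem_upperEdges_of_F1_le {x y : ℝ × ℝ} (hx : x ∈ upperEdges) (hy : y ∈ S)
    (h : F1 x ≤ F1 y) : y = x := by
  obtain ⟨-, hedge⟩ := hx
  obtain ⟨-, hy₂, hy₃, -⟩ := hy
  obtain ⟨h₁, h₂, -⟩ := h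
  simp only [F1] at h₁ h₂
  rcases hedge with hedge | hedge <;> exact Prod.ext (by linarith) (by linarith)

lemma eq_of_mem_upperEdges_of_F2_le {x y : ℝ × ℝ} (hx : x ∈ upperEdges) (hy : y ∈ S)
    (h : F2 x ≤ F2 y) : y = x := by
  obtain ⟨-, hedge⟩ := hx
  obtain ⟨-, hy₂, hy₃, -⟩ := hy
  obtain ⟨h₁, h₂, h₃⟩ := h
  simp only [F2] at h₁ h₂ h₃
  rcases hedge with hedge | hedge <;> exact Prod.ext (by linarith) (by linarith)

lemma upperEdges_subset_N1 : upperEdges ⊆ N1 := fun _ hx =>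
  ⟨hx.1, not_exists_dominating_of_forall_le_imp_eq fun _ hy => eq_of_mem_upperEdges_of_F1_le hx hy⟩

lemma upperEdges_subset_N2 : upperEdges ⊆ N2 := fun _ hx =>
  ⟨hx.1, not_exists_dominating_of_forall_le_imp_eq fun _ hy => eq_of_mem_upperEdges_of_F2_le hx hy⟩

lemma F1_lt_F1 {x y : ℝ × ℝ} (h₁ : x.1 + x.2 < y.1 + y.2)
    (h₂ : 25 * (y.1 - x.1) ≤ 14 * (y.2 - x.2)) : F1 x < F1 y :=
  Prod.mk_lt_mk_of_lt_of_le (by linarith) (Prod.mk_le_mk.2 ⟨by linarith, by linarith⟩)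

lemma exists_F1_lt_of_notMem_upperEdges {x : ℝ × ℝ} (hx : x ∈ S) (hedge : x ∉ upperEdges) :
    ∃ y ∈ S, F1 x < F1 y := by
  obtain ⟨a, b⟩ := x
  simp only [upperEdges, Set.mem_ofPred_eq, not_and, not_or] at hedge
  obtain ⟨hb, hline⟩ := hedge hx
  obtain ⟨h₁, h₂, h₃, h₄, h₅, h₆, h₇, h₈, h₉⟩ := hx
  replace h₂ : -a + 2 * b < 9 := lt_of_le_of_ne h₂ hline
  replace h₃ : b < 6 := lt_of_le_of_ne h₃ hb
  rcases le_or_gt 3 a with ha | ha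
  · refine ⟨(a, 6), ?_, F1_lt_F1 ?_ ?_⟩
    · and_intros <;> dsimp only <;> linarith
    all_goals dsimp only; linarith
  rcases le_or_gt (-9) (25 * a - 14 * b) with hcorner | hcorner
  · refine ⟨(3, 6), ?_, F1_lt_F1 ?_ ?_⟩
    · and_intros <;> norm_num
    all_goals dsimp only; linarith
  -- move along `(14, 25)` until the line `-x₁ + 2x₂ = 9` is reached
  set t := (9 + a - 2 * b) / 36 with ht
  have ht₀ : 0 < t := by rw [ht]; linarith
  refine ⟨(a + 14 * t, b + 25 * t), ?_, F1_lt_F1 ?_ ?_⟩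
  · and_intros <;> dsimp only <;> rw [ht] <;> linarith
  all_goals dsimp only; linarith

lemma N1_subset_upperEdges : N1 ⊆ upperEdges := by
  intro x ⟨hxS, hnd⟩
  by_contra hedge
  obtain ⟨y, hy, hlt⟩ := exists_F1_lt_of_notMem_upperEdges hxS hedge
  exact hnd ⟨y, hy, hlt.le, hlt.ne'⟩

/-- The set of all possible compromises of the two-level example equals the union of
the two segments `H((6,6),(3,6))` and `H((3,6),(1,5))`. -/
theorem compromises_eq_union_of_segments :
    N1 ∩ N2 =
      convexHull ℝ {((6, 6) : ℝ × ℝ), ((3, 6) : ℝ × ℝ)} ∪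
        convexHull ℝ {((3, 6) : ℝ × ℝ), ((1, 5) : ℝ × ℝ)} := by
  rw [segments_eq_upperEdges]
  exact (Set.inter_subset_left.trans N1_subset_upperEdges).antisymm
    (Set.subset_inter upperEdges_subset_N1 upperEdges_subset_N2)
end

section
/- The point (2, 11/2) is a non-dominated solution of the level-1 multiobjective problem with bounded variables: it belongs to S₁ = {x ∈ S : 1 ≤ x₁ ≤ 3, 5 ≤ x₂ ≤ 6}, and there is no y ∈ S₁ with F₁(y) ≥ F₁((2,11/2)) componentwise and F₁(y) ≠ F₁((2,11/2)). -/
/-- The feasible set of the level-1 problem with bounded variables. -/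
def S1 : Set (ℝ × ℝ) := {x ∈ S | 1 ≤ x.1 ∧ x.1 ≤ 3 ∧ 5 ≤ x.2 ∧ x.2 ≤ 6}

/-!
With the strictly positive weights `(2, 25, 60)` the weighted sum of the three level-1 objectives
is `41/2 * (-x₁ + 2x₂)`: the weights are chosen so that its gradient is normal to the constraint
`-x₁ + 2x₂ ≤ 9`, which is active at `(2, 11/2)`. Hence `(2, 11/2)` maximizes this weighted sum on
`S`, and a maximizer of a weighted sum with strictly positive weights is non-dominated.
-/

section Scalarization

variable {α β : Type*} [Field α] [LinearOrder α] [IsStrictOrderedRing α]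

def weightedSum (w v : α × α × α) : α :=
  w.1 * v.1 + w.2.1 * v.2.1 + w.2.2 * v.2.2

theorem eq_of_le_of_weightedSum_le {w u v : α × α × α}
    (hw₁ : 0 < w.1) (hw₂ : 0 < w.2.1) (hw₃ : 0 < w.2.2)
    (huv : u ≤ v) (hsum : weightedSum w v ≤ weightedSum w u) : u = v := by
  obtain ⟨h₁, h₂, h₃⟩ : u.1 ≤ v.1 ∧ u.2.1 ≤ v.2.1 ∧ u.2.2 ≤ v.2.2 := huv
  have e₁ := mul_le_mul_of_nonneg_left h₁ hw₁.le
  have e₂ := mul_le_mul_of_nonneg_left h₂ hw₂.le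
  have e₃ := mul_le_mul_of_nonneg_left h₃ hw₃.le
  unfold weightedSum at hsum
  refine Prod.ext (mul_left_cancel₀ hw₁.ne' ?_) (Prod.ext (mul_left_cancel₀ hw₂.ne' ?_)
    (mul_left_cancel₀ hw₃.ne' ?_)) <;> linarith

theorem IsMaxOn.not_exists_dominating {w : α × α × α} {F : β → α × α × α} {T : Set β} {x : β}
    (hw₁ : 0 < w.1) (hw₂ : 0 < w.2.1) (hw₃ : 0 < w.2.2)
    (hmax : IsMaxOn (fun y => weightedSum w (F y)) T x) :
    ¬ ∃ y ∈ T, F x ≤ F y ∧ F y ≠ F x := by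
  rintro ⟨y, hy, hle, hne⟩
  exact hne (eq_of_le_of_weightedSum_le hw₁ hw₂ hw₃ hle (isMaxOn_iff.1 hmax y hy)).symm

end Scalarization

theorem weightedSum_F1 (x : ℝ × ℝ) :
    weightedSum (2, 25, 60) (F1 x) = 41 / 2 * (-x.1 + 2 * x.2) := by
  simp only [weightedSum, F1]
  ring

theorem isMaxOn_weightedSum_F1 :
    IsMaxOn (fun y => weightedSum (2, 25, 60) (F1 y)) S ((2, 11/2) : ℝ × ℝ) :=
  isMaxOn_iff.2 fun y hy => by
    simp only [weightedSum_F1]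
    linarith [hy.2.1]

theorem two_eleven_halves_mem_S1 : ((2, 11/2) : ℝ × ℝ) ∈ S1 := by
  norm_num [S1, S]

/-- The point `(2, 11/2)` is a non-dominated solution of the level-1 multiobjective
problem with bounded variables over `S₁`. -/
theorem two_eleven_halves_nondominated_level1 :
    ((2, 11/2) : ℝ × ℝ) ∈ S1 ∧
      ¬ ∃ y ∈ S1, F1 ((2, 11/2) : ℝ × ℝ) ≤ F1 y ∧ F1 y ≠ F1 ((2, 11/2) : ℝ × ℝ) :=
  ⟨two_eleven_halves_mem_S1,
    (isMaxOn_weightedSum_F1.on_subset fun _ hx => hx.1).not_exists_dominating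
      (by norm_num) (by norm_num) (by norm_num)⟩
end
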